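/- Let P = XᵀX + ηI with η > 0, and let the search direction be d = P^{-1}-scaled gradient D = ∇f_c(X)P^{-1}. Then ‖D‖_F² ≤ ‖∇f_c(X)‖_{P*}²/η, and if 𝒜 satisfies RIP with constant δ ≤ 1 on rank-2r matrices then ‖𝒜(XDᵀ+DXᵀ)‖² ≤ 8‖∇f_c(X)‖_{P*}². -/

import Mathlib

open Matrix BigOperators

/-- Frobenius norm of a real matrix. -/
noncomputable def frob {n m : Type*} [Fintype n] [Fintype m] (A : Matrix n m ℝ) : ℝ :=
  Real.sqrt (∑ i, ∑ j, (A i j) ^ 2)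

section
open scoped ComplexOrder

/-- The positive semidefinite square root of a positive semidefinite matrix
(the definition `Matrix.PosSemidef.sqrt` of the older Mathlib, since removed). -/
noncomputable def Matrix.PosSemidef.sqrt {n 𝕜 : Type*} [Fintype n] [DecidableEq n] [RCLike 𝕜]
    {A : Matrix n n 𝕜} (hA : A.PosSemidef) : Matrix n n 𝕜 :=
  hA.1.eigenvectorUnitary.1 * diagonal ((↑) ∘ Real.sqrt ∘ hA.1.eigenvalues) *
    (star hA.1.eigenvectorUnitary : Matrix n n 𝕜)

end

lemma Matrix.PosSemidef.sqrt_mul_self {n : Type*} [Fintype n] [DecidableEq n]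
    {A : Matrix n n ℝ} (hA : A.PosSemidef) : hA.sqrt * hA.sqrt = A := by
  have hU : (star hA.1.eigenvectorUnitary : Matrix n n ℝ) * hA.1.eigenvectorUnitary.1 = 1 :=
    Unitary.coe_star_mul_self _
  have hd : diagonal ((RCLike.ofReal : ℝ → ℝ) ∘ Real.sqrt ∘ hA.1.eigenvalues)
      * diagonal ((RCLike.ofReal : ℝ → ℝ) ∘ Real.sqrt ∘ hA.1.eigenvalues)
      = diagonal (RCLike.ofReal ∘ hA.1.eigenvalues) := by
    rw [diagonal_mul_diagonal]
    congr 1; funext i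
    simp [Real.mul_self_sqrt (hA.eigenvalues_nonneg i)]
  unfold Matrix.PosSemidef.sqrt
  conv_rhs => rw [hA.1.spectral_theorem, Unitary.conjStarAlgAut_apply]
  calc _ = hA.1.eigenvectorUnitary.1 * diagonal ((RCLike.ofReal : ℝ → ℝ) ∘ Real.sqrt ∘ hA.1.eigenvalues)
        * ((star hA.1.eigenvectorUnitary : Matrix n n ℝ) * hA.1.eigenvectorUnitary.1)
        * diagonal ((RCLike.ofReal : ℝ → ℝ) ∘ Real.sqrt ∘ hA.1.eigenvalues)
        * (star hA.1.eigenvectorUnitary : Matrix n n ℝ) := by simp only [Matrix.mul_assoc]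
    _ = _ := by rw [hU, Matrix.mul_one, Matrix.mul_assoc _ (diagonal _) (diagonal _), hd]

lemma Matrix.PosSemidef.sqrt_isHermitian {n : Type*} [Fintype n] [DecidableEq n]
    {A : Matrix n n ℝ} (hA : A.PosSemidef) : hA.sqrtᴴ = hA.sqrt := by
  unfold Matrix.PosSemidef.sqrt
  rw [Matrix.conjTranspose_mul, Matrix.conjTranspose_mul, Matrix.diagonal_conjTranspose,
    ← Matrix.star_eq_conjTranspose, ← Matrix.star_eq_conjTranspose, star_star]
  simp only [Matrix.mul_assoc]
  congr 3

lemma frob_sq {n m : Type*} [Fintype n] [Fintype m] (A : Matrix n m ℝ) :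
    frob A ^ 2 = ∑ i, ∑ j, (A i j) ^ 2 := by
  rw [frob, Real.sq_sqrt]
  exact Finset.sum_nonneg fun i _ => Finset.sum_nonneg fun j _ => sq_nonneg _

lemma frob_sq_eq_trace {n m : Type*} [Fintype n] [Fintype m]
    (A : Matrix n m ℝ) : frob A ^ 2 = Matrix.trace (A * Aᴴ) := by
  rw [frob_sq]
  simp [Matrix.trace, Matrix.diag, Matrix.mul_apply, Matrix.conjTranspose_apply, sq]

lemma trace_nonneg_of_psd {n : Type*} [Fintype n] [DecidableEq n] {A : Matrix n n ℝ}
    (hA : A.PosSemidef) : 0 ≤ Matrix.trace A := by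
  apply Finset.sum_nonneg
  intro i _
  have := hA.trace_nonneg
  exact (hA.diag_nonneg (i := i))

lemma trace_mul_psd_nonneg {n : Type*} [Fintype n] [DecidableEq n] {K C : Matrix n n ℝ}
    (hK : K.PosSemidef) (hC : C.PosSemidef) : 0 ≤ Matrix.trace (K * C) := by
  have hT : hK.sqrt * hK.sqrt = K := hK.sqrt_mul_self
  have hH : hK.sqrt ᴴ = hK.sqrt := hK.sqrt_isHermitian
  have e1 : Matrix.trace (K * C) = Matrix.trace (hK.sqrtᴴ * C * hK.sqrt) := by
    rw [hH]
    conv_lhs => rw [← hT]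
    rw [Matrix.mul_assoc, Matrix.trace_mul_comm, Matrix.mul_assoc]
  rw [e1]
  exact trace_nonneg_of_psd (hC.conjTranspose_mul_mul_same _)

lemma matrix_rank_add_le {n : ℕ} (A B : Matrix (Fin n) (Fin n) ℝ) :
    (A + B).rank ≤ A.rank + B.rank := by
  rw [Matrix.rank, Matrix.rank, Matrix.rank, Matrix.mulVecLin_add]
  refine le_trans (Submodule.finrank_mono ?_)
    (Submodule.finrank_add_le_finrank_add_finrank _ _)
  rintro x ⟨y, rfl⟩
  exact Submodule.mem_sup.mpr ⟨A.mulVecLin y, ⟨y, rfl⟩, B.mulVecLin y, ⟨y, rfl⟩, rfl⟩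

/-- Higher-order terms bound: with `P = XᵀX + ηI`, `η > 0`, gradient
`∇f_c(X) = 4(∑ₖ tr(A k E) A k) X` of `f_c(X) = ‖𝒜(XXᵀ−M★)‖²` and search direction
`D = ∇f_c(X) P⁻¹`: one has `‖D‖_F² ≤ ‖∇f_c(X)‖_{P*}²/η`, and if `𝒜` satisfies
RIP with constant `δ ≤ 1` on rank-`2r` matrices, then
`‖𝒜(XDᵀ+DXᵀ)‖² ≤ 8‖∇f_c(X)‖_{P*}²`, where `‖G‖_{P*} = ‖G P^{-1/2}‖_F`. -/
theorem stmt18 {n m r : ℕ} (δ η : ℝ) (hδ0 : 0 ≤ δ) (hδ1 : δ ≤ 1) (hη : 0 < η)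
    (A : Fin m → Matrix (Fin n) (Fin n) ℝ) (hAsym : ∀ k, (A k)ᴴ = A k)
    (hRIP : ∀ M : Matrix (Fin n) (Fin n) ℝ, M.rank ≤ 2 * r →
      (1 - δ) * frob M ^ 2 ≤ ∑ k, (Matrix.trace (A k * M)) ^ 2 ∧
      ∑ k, (Matrix.trace (A k * M)) ^ 2 ≤ (1 + δ) * frob M ^ 2)
    (M : Matrix (Fin n) (Fin n) ℝ) (hMsym : Mᴴ = M)
    (X : Matrix (Fin n) (Fin r) ℝ)
    (hP : (Xᴴ * X + η • (1 : Matrix (Fin r) (Fin r) ℝ)).PosSemidef)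
    (G D : Matrix (Fin n) (Fin r) ℝ)
    (hG : G = (4 : ℝ) • ((∑ k, Matrix.trace (A k * (X * Xᴴ - M)) • A k) * X))
    (hD : D = G * (Xᴴ * X + η • (1 : Matrix (Fin r) (Fin r) ℝ))⁻¹) :
    frob D ^ 2 ≤ frob (G * (hP.sqrt)⁻¹) ^ 2 / η ∧
    (∑ k, (Matrix.trace (A k * (X * Dᴴ + D * Xᴴ))) ^ 2)
      ≤ 8 * frob (G * (hP.sqrt)⁻¹) ^ 2 := by
  set Pm := Xᴴ * X + η • (1 : Matrix (Fin r) (Fin r) ℝ) with hPmdef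
  have hXX : (Xᴴ * X).PosSemidef := Matrix.posSemidef_conjTranspose_mul_self X
  have hone : (η • (1 : Matrix (Fin r) (Fin r) ℝ)).PosDef :=
    Matrix.PosDef.one.smul hη
  have hPd : Pm.PosDef := Matrix.PosDef.posSemidef_add hXX hone
  have hPdet : IsUnit Pm.det := isUnit_iff_ne_zero.mpr (ne_of_gt hPd.det_pos)
  have hSS : hP.sqrt * hP.sqrt = Pm := hP.sqrt_mul_self
  have hSH : hP.sqrtᴴ = hP.sqrt := hP.sqrt_isHermitian
  obtain ⟨S, hgen⟩ : ∃ S, hP.sqrt = S := ⟨_, rfl⟩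
  rw [hgen] at hSS hSH ⊢
  have hSdet : IsUnit S.det := by
    refine isUnit_iff_ne_zero.mpr (fun h => (ne_of_gt hPd.det_pos) ?_)
    rw [← hSS, Matrix.det_mul, h, mul_zero]
  have hSiS : S⁻¹ * S = 1 := Matrix.nonsing_inv_mul _ hSdet
  have hSSi : S * S⁻¹ = 1 := Matrix.mul_nonsing_inv _ hSdet
  have hSiH : (S⁻¹)ᴴ = S⁻¹ := by
    rw [Matrix.conjTranspose_nonsing_inv, hSH]
  have hPinv2 : Pm⁻¹ = S⁻¹ * S⁻¹ := by
    have h2 := Matrix.mul_inv_rev S S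
    rw [hSS] at h2
    exact h2
  have hPmS : Pm * S⁻¹ = S := by
    have h2 : S * S * S⁻¹ = S := by
      rw [Matrix.mul_assoc, hSSi, Matrix.mul_one]
    rw [hSS] at h2
    exact h2
  have hSPS : S⁻¹ * Pm * S⁻¹ = 1 := by
    rw [Matrix.mul_assoc, hPmS, hSiS]
  have hPPi : Pm * Pm⁻¹ = 1 := Matrix.mul_nonsing_inv _ hPdet
  have hPiH : (Pm⁻¹)ᴴ = Pm⁻¹ := by rw [Matrix.conjTranspose_nonsing_inv, hP.isHermitian.eq]
  -- key identity : D * Pm * Dᴴ = Y * Yᴴ with Y = G * sqrt⁻¹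
  have key1 : D * Pm * Dᴴ = (G * S⁻¹) * (G * S⁻¹)ᴴ := by
    have hcan : Pm * (S⁻¹ * (S⁻¹ * Gᴴ)) = Gᴴ := by
      rw [← Matrix.mul_assoc, hPmS, ← Matrix.mul_assoc, hSSi, Matrix.one_mul]
    rw [hD, Matrix.conjTranspose_mul, hPiH, Matrix.conjTranspose_mul, hSiH, hPinv2]
    simp only [Matrix.mul_assoc]
    rw [hcan]
  constructor
  · -- part 1
    have expand : D * Pm * Dᴴ = D * (Xᴴ * X) * Dᴴ + η • (D * Dᴴ) := by
      rw [hPmdef]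
      rw [Matrix.mul_add, Matrix.add_mul]
      congr 1
      rw [Matrix.mul_smul, Matrix.mul_one, Matrix.smul_mul]
    have hpsd := hXX.mul_mul_conjTranspose_same D
    have htr := trace_nonneg_of_psd hpsd
    have h1 : η * Matrix.trace (D * Dᴴ) ≤ Matrix.trace (D * Pm * Dᴴ) := by
      rw [expand, Matrix.trace_add, Matrix.trace_smul, smul_eq_mul]
      linarith
    rw [le_div_iff₀ hη, frob_sq_eq_trace, frob_sq_eq_trace, ← key1]
    linarith
  · -- part 2
    set U := X * Dᴴ with hU
    have hUH : Uᴴ = D * Xᴴ := by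
      rw [hU, Matrix.conjTranspose_mul, Matrix.conjTranspose_conjTranspose]
    rw [← hUH]
    -- rank bound
    have hrX : X.rank ≤ r := by simpa using X.rank_le_card_width
    have hrU : U.rank ≤ r := le_trans (Matrix.rank_mul_le_left X Dᴴ) hrX
    have hrUH : Uᴴ.rank ≤ r := by rw [Matrix.rank_conjTranspose]; exact hrU
    have hrW : (U + Uᴴ).rank ≤ 2 * r := le_trans (matrix_rank_add_le _ _) (by omega)
    have hrip := (hRIP (U + Uᴴ) hrW).2
    -- frob (U + Uᴴ)² ≤ 4 frob U²
    have hswap : ∑ p : Fin n × Fin n, U p.2 p.1 ^ 2 = ∑ p : Fin n × Fin n, U p.1 p.2 ^ 2 := by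
      rw [Fintype.sum_prod_type, Fintype.sum_prod_type]
      exact Finset.sum_comm
    have hcs := Finset.sum_mul_sq_le_sq_mul_sq Finset.univ
      (fun p : Fin n × Fin n => U p.1 p.2) (fun p : Fin n × Fin n => U p.2 p.1)
    set T := ∑ p : Fin n × Fin n, U p.1 p.2 * U p.2 p.1 with hT
    set Q := ∑ p : Fin n × Fin n, U p.1 p.2 ^ 2 with hQ
    have hQ0 : 0 ≤ Q := Finset.sum_nonneg fun p _ => sq_nonneg _
    have hTQ : T ≤ Q := by
      simp only [hswap] at hcs
      nlinarith [hcs]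
    have hfrobU : frob U ^ 2 = Q := by
      rw [frob_sq, hQ, Fintype.sum_prod_type]
    have hfW : frob (U + Uᴴ) ^ 2 = 2 * Q + 2 * T := by
      rw [frob_sq]
      have e : ∀ i j, ((U + Uᴴ) i j) ^ 2
          = U i j ^ 2 + 2 * (U i j * U j i) + U j i ^ 2 := by
        intro i j
        simp only [Matrix.add_apply, Matrix.conjTranspose_apply, star_trivial]
        ring
      simp_rw [e, Finset.sum_add_distrib]
      have e1 : ∑ i, ∑ j, U i j ^ 2 = Q := by rw [hQ, Fintype.sum_prod_type]
      have e2 : ∑ i, ∑ j, 2 * (U i j * U j i) = 2 * T := by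
        rw [hT, Fintype.sum_prod_type, Finset.mul_sum]
        congr 1; ext i; rw [Finset.mul_sum]
      have e3 : ∑ i, ∑ j, U j i ^ 2 = Q := by
        rw [← hswap, Fintype.sum_prod_type]
      rw [e1, e2, e3]; ring
    -- frob U² ≤ frob (G * sqrt⁻¹)²
    have hfrU : frob U ^ 2 ≤ frob (G * S⁻¹) ^ 2 := by
      obtain ⟨Y, hY⟩ : ∃ Y, G * S⁻¹ = Y := ⟨_, rfl⟩
      obtain ⟨B, hB⟩ : ∃ B, X * S⁻¹ = B := ⟨_, rfl⟩
      rw [hY]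
      have hU' : U = B * Yᴴ := by
        rw [hU, hD, ← hY, ← hB, Matrix.conjTranspose_mul, hPiH, Matrix.conjTranspose_mul, hSiH,
          hPinv2]
        simp only [Matrix.mul_assoc]
      have hBB : Bᴴ * B = S⁻¹ * (Xᴴ * X) * S⁻¹ := by
        rw [← hB, Matrix.conjTranspose_mul, hSiH]
        simp only [Matrix.mul_assoc]
      have hone' : 1 - Bᴴ * B = S⁻¹ * (η • (1 : Matrix (Fin r) (Fin r) ℝ)) * S⁻¹ := by
        have hid : S⁻¹ * (Xᴴ * X) * S⁻¹
            + S⁻¹ * (η • (1 : Matrix (Fin r) (Fin r) ℝ)) * S⁻¹ = 1 := by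
          rw [← Matrix.add_mul, ← Matrix.mul_add, ← hPmdef]
          exact hSPS
        rw [hBB, sub_eq_iff_eq_add']
        exact hid.symm
      have hpsd2 : (1 - Bᴴ * B).PosSemidef := by
        have := hone.posSemidef.conjTranspose_mul_mul_same S⁻¹
        rw [hSiH] at this
        rw [hone']
        exact this
      have h0 : 0 ≤ Matrix.trace ((Yᴴ * Y) * (1 - Bᴴ * B)) :=
        trace_mul_psd_nonneg (Matrix.posSemidef_conjTranspose_mul_self Y) hpsd2
      have hexp2 : Matrix.trace (U * Uᴴ) = Matrix.trace ((Yᴴ * Y) * (Bᴴ * B)) := by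
        have h1 : U * Uᴴ = B * (Yᴴ * Y * Bᴴ) := by
          rw [hU', Matrix.conjTranspose_mul B Yᴴ, Matrix.conjTranspose_conjTranspose]
          simp only [Matrix.mul_assoc]
        rw [h1, Matrix.trace_mul_comm]
        simp only [Matrix.mul_assoc]
      have hexp : Matrix.trace ((Yᴴ * Y) * (1 - Bᴴ * B))
          = Matrix.trace (Y * Yᴴ) - Matrix.trace (U * Uᴴ) := by
        rw [Matrix.mul_sub, Matrix.mul_one, Matrix.trace_sub, Matrix.trace_mul_comm Yᴴ Y, hexp2]
      rw [frob_sq_eq_trace, frob_sq_eq_trace]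
      linarith [h0, hexp.symm.le]
    -- combine
    have hWnn : 0 ≤ frob (U + Uᴴ) ^ 2 := sq_nonneg _
    calc (∑ k, (Matrix.trace (A k * (U + Uᴴ))) ^ 2)
        ≤ (1 + δ) * frob (U + Uᴴ) ^ 2 := hrip
      _ ≤ 2 * frob (U + Uᴴ) ^ 2 := by nlinarith
      _ ≤ 8 * frob (G * S⁻¹) ^ 2 := by
          rw [hfW]
          have := hfrU
          rw [hfrobU] at this
          linarith
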